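/- arXiv:1209.5711 — 4 statements merged into one kernel-verified Lean document; each statement's English description precedes it below -/
import Mathlib

section
/- If (x1 + ω·x2, ω·x3) ∈ G2 for every ω with |ω| = 1, then x ∈ E. -/
open Complex

def tetrablockE : Set (ℂ × ℂ × ℂ) :=
  {x | ‖x.1 - (starRingEnd ℂ) x.2.1 * x.2.2‖ +
       ‖x.2.1 - (starRingEnd ℂ) x.1 * x.2.2‖ +
       ‖x.2.2‖ ^ 2 < 1}

def symBidisc : Set (ℂ × ℂ) :=
  {p | ‖p.1 - (starRingEnd ℂ) p.1 * p.2‖ + ‖p.2‖ ^ 2 < 1}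

/-!
Write `A = x₁ - x̄₂x₃` and `B = x₂ - x̄₁x₃`. For `|ω| = 1` the first term of the
`G₂`-condition at `(x₁ + ωx₂, ωx₃)` is `A + ωB`, so the hypothesis says
`|A + ωB| + |x₃|² < 1` on the whole circle; choosing `ω` that aligns `ωB` with `A` turns
`|A + ωB|` into `|A| + |B|`, which is the tetrablock condition.
-/

open ComplexConjugate

theorem exists_norm_eq_one_norm_add_mul_eq (a b : ℂ) :
    ∃ ω : ℂ, ‖ω‖ = 1 ∧ ‖a + ω * b‖ = ‖a‖ + ‖b‖ := by
  by_cases hab : a = 0 ∨ b = 0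
  · refine ⟨1, norm_one, ?_⟩
    rcases hab with rfl | rfl <;> simp
  obtain ⟨ha, hb⟩ := not_or.mp hab
  have ha' : ‖a‖ ≠ 0 := norm_ne_zero_iff.mpr ha
  refine ⟨(‖b‖ / ‖a‖ : ℝ) * a / b, ?_, ?_⟩
  · rw [norm_div, norm_mul, norm_real, Real.norm_of_nonneg (by positivity)]
    field_simp
  · have hωb : (‖b‖ / ‖a‖ : ℝ) * a / b * b = (‖b‖ / ‖a‖ : ℝ) • a := by
      rw [div_mul_cancel₀ _ hb, real_smul]
    rw [hωb, (SameRay.sameRay_nonneg_smul_right a (by positivity)).norm_add, norm_smul,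
      Real.norm_of_nonneg (by positivity), div_mul_cancel₀ _ ha']

theorem add_mul_sub_conj_mul_mul_eq {ω : ℂ} (hω : ‖ω‖ = 1) (s t p : ℂ) :
    s + ω * t - conj (s + ω * t) * (ω * p) = s - conj t * p + ω * (t - conj s * p) := by
  have hωω : conj ω * ω = 1 := by
    rw [← normSq_eq_conj_mul_self, normSq_eq_norm_sq, hω]
    norm_num
  simp only [map_add, map_mul]
  linear_combination (-(p * conj t)) * hωω

theorem symBidisc_to_tetrablock (x : ℂ × ℂ × ℂ)
    (h : ∀ ω : ℂ, ‖ω‖ = 1 → (x.1 + ω * x.2.1, ω * x.2.2) ∈ symBidisc) :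
    x ∈ tetrablockE := by
  obtain ⟨ω, hω, hnorm⟩ := exists_norm_eq_one_norm_add_mul_eq
    (x.1 - conj x.2.1 * x.2.2) (x.2.1 - conj x.1 * x.2.2)
  have hmem := h ω hω
  simp only [symBidisc, Set.mem_ofPred_eq, add_mul_sub_conj_mul_mul_eq hω, hnorm, norm_mul, hω,
    one_mul] at hmem
  exact hmem
end

section
/- The tetrablock E is linearly convex: for every point x ∈ C^3 with x ∉ E, there exists a complex affine hyperplane L through x with L ∩ E = ∅. -/
/-!
For `y ∈ E` and `‖z‖ = 1` one has `‖y₁ - y₃ z‖ < ‖1 - y₂ z‖`: multiplied by `s = 1 - ‖y₃‖²`, the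
difference of the squares is `s² + ‖B‖² - ‖A‖² - 2 s Re (z B)` with `A = y₁ - ȳ₂ y₃`,
`B = y₂ - ȳ₁ y₃`, and `‖A‖ + ‖B‖ < s`. For `x ∉ E` with `‖x₃‖ < 1` and (by the symmetry
`y₁ ↔ y₂` of `E`) `‖B‖ ≤ ‖A‖`, the unimodular `z` with `z B = ‖B‖` turns the same expression into
`(s - ‖B‖ - ‖A‖)(s - ‖B‖ + ‖A‖) ≤ 0`. Writing `μ (x₁ - x₃ z) = λ (1 - x₂ z)` with `‖μ‖ ≤ ‖λ‖`,
`λ ≠ 0`, the hyperplane `μ (y₁ - z y₃) = λ (1 - z y₂)` then passes through `x` and misses `E`.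
If `‖x₃‖ ≥ 1`, the hyperplane `y₃ = x₃` does.
-/

open Complex

open ComplexConjugate

def HasDisjointHyperplaneThrough (S : Set (ℂ × ℂ × ℂ)) (x : ℂ × ℂ × ℂ) : Prop :=
  ∃ a b c d : ℂ, (a, b, c) ≠ (0, 0, 0) ∧
    a * x.1 + b * x.2.1 + c * x.2.2 = d ∧
    ∀ y ∈ S, a * y.1 + b * y.2.1 + c * y.2.2 ≠ d

lemma HasDisjointHyperplaneThrough.of_swap {S : Set (ℂ × ℂ × ℂ)} {x : ℂ × ℂ × ℂ}
    (hS : ∀ y ∈ S, (y.2.1, y.1, y.2.2) ∈ S)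
    (h : HasDisjointHyperplaneThrough S (x.2.1, x.1, x.2.2)) :
    HasDisjointHyperplaneThrough S x := by
  obtain ⟨a, b, c, d, hne, hx, hdisj⟩ := h
  refine ⟨b, a, c, d, ?_, by linear_combination hx,
    fun y hy hyd => hdisj _ (hS y hy) (by linear_combination hyd)⟩
  contrapose! hne
  simp_all only [Prod.mk.injEq]

lemma swap_mem_tetrablockE {y : ℂ × ℂ × ℂ} (hy : y ∈ tetrablockE) :
    (y.2.1, y.1, y.2.2) ∈ tetrablockE := by
  simp only [tetrablockE, Set.mem_ofPred_eq] at hy ⊢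
  linarith

lemma norm_lt_one_of_mem_tetrablockE {y : ℂ × ℂ × ℂ} (hy : y ∈ tetrablockE) :
    ‖y.2.2‖ < 1 := by
  simp only [tetrablockE, Set.mem_ofPred_eq] at hy
  have hA := norm_nonneg (y.1 - conj y.2.1 * y.2.2)
  have hB := norm_nonneg (y.2.1 - conj y.1 * y.2.2)
  exact (sq_lt_one_iff₀ (norm_nonneg _)).1 (by linarith)

lemma hasDisjointHyperplaneThrough_of_one_le_norm {x : ℂ × ℂ × ℂ} (hx : 1 ≤ ‖x.2.2‖) :
    HasDisjointHyperplaneThrough tetrablockE x := by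
  refine ⟨0, 0, 1, x.2.2, by simp, by ring, fun y hy hyx => ?_⟩
  have : y.2.2 = x.2.2 := by linear_combination hyx
  exact (norm_lt_one_of_mem_tetrablockE hy).not_ge (this ▸ hx)

lemma one_sub_sq_norm_mul_sub_sq_norm (a b c z : ℂ) (hz : ‖z‖ = 1) :
    (1 - ‖c‖ ^ 2) * (‖1 - b * z‖ ^ 2 - ‖a - c * z‖ ^ 2) =
      (1 - ‖c‖ ^ 2) ^ 2 + ‖b - conj a * c‖ ^ 2 - ‖a - conj b * c‖ ^ 2
        - 2 * (1 - ‖c‖ ^ 2) * (z * (b - conj a * c)).re := by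
  have hz' : z.re * z.re + z.im * z.im = 1 := by
    rw [← normSq_apply, normSq_eq_norm_sq, hz, one_pow]
  simp only [← normSq_eq_norm_sq, normSq_apply, mul_re, mul_im, sub_re, sub_im, one_re, one_im,
    conj_re, conj_im]
  linear_combination (1 - (c.re * c.re + c.im * c.im)) *
    (b.re * b.re + b.im * b.im - c.re * c.re - c.im * c.im) * hz'

lemma norm_sub_mul_lt_norm_one_sub_mul_of_mem_tetrablockE {y : ℂ × ℂ × ℂ}
    (hy : y ∈ tetrablockE) {z : ℂ} (hz : ‖z‖ = 1) :
    ‖y.1 - y.2.2 * z‖ < ‖1 - y.2.1 * z‖ := by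
  set A := y.1 - conj y.2.1 * y.2.2
  set B := y.2.1 - conj y.1 * y.2.2
  set s := 1 - ‖y.2.2‖ ^ 2
  have hAB : ‖A‖ + ‖B‖ < s := by
    simp only [tetrablockE, Set.mem_ofPred_eq] at hy
    linarith
  have hre : (z * B).re ≤ ‖B‖ := (re_le_norm _).trans (by rw [norm_mul, hz, one_mul])
  have hA := norm_nonneg A
  have hB := norm_nonneg B
  have hsq : 0 < s * (‖1 - y.2.1 * z‖ ^ 2 - ‖y.1 - y.2.2 * z‖ ^ 2) := by
    rw [one_sub_sq_norm_mul_sub_sq_norm _ _ _ _ hz]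
    nlinarith
  have hdiff := pos_of_mul_pos_right hsq (by linarith)
  exact lt_of_pow_lt_pow_left₀ 2 (norm_nonneg _) (by linarith)

lemma exists_norm_eq_one_norm_one_sub_mul_le_of_not_mem_tetrablockE {x : ℂ × ℂ × ℂ}
    (hx : x ∉ tetrablockE) (hc : ‖x.2.2‖ < 1)
    (hBA : ‖x.2.1 - conj x.1 * x.2.2‖ ≤ ‖x.1 - conj x.2.1 * x.2.2‖) :
    ∃ z : ℂ, ‖z‖ = 1 ∧ ‖1 - x.2.1 * z‖ ≤ ‖x.1 - x.2.2 * z‖ := by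
  set A := x.1 - conj x.2.1 * x.2.2
  set B := x.2.1 - conj x.1 * x.2.2
  set s := 1 - ‖x.2.2‖ ^ 2
  have hs : 0 < s := by nlinarith [norm_nonneg x.2.2]
  have hAB : s ≤ ‖A‖ + ‖B‖ := by
    simp only [tetrablockE, Set.mem_ofPred_eq, not_lt] at hx
    linarith
  obtain ⟨z, hz, hzB⟩ := exists_norm_eq_mul_self B
  refine ⟨z, hz, ?_⟩
  have hre : (z * B).re = ‖B‖ := by rw [← hzB, ofReal_re]
  have hfactor : s * (‖1 - x.2.1 * z‖ ^ 2 - ‖x.1 - x.2.2 * z‖ ^ 2) =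
      (s - ‖B‖ - ‖A‖) * (s - ‖B‖ + ‖A‖) := by
    rw [one_sub_sq_norm_mul_sub_sq_norm _ _ _ _ hz, hre]
    ring
  have hle : s * (‖1 - x.2.1 * z‖ ^ 2 - ‖x.1 - x.2.2 * z‖ ^ 2) ≤ 0 := by
    rw [hfactor]
    exact mul_nonpos_of_nonpos_of_nonneg (by linarith) (by linarith)
  have hdiff := nonpos_of_mul_nonpos_right hle hs
  exact (pow_le_pow_iff_left₀ (norm_nonneg _) (norm_nonneg _) two_ne_zero).1 (by linarith)

lemma hasDisjointHyperplaneThrough_of_norm_one_sub_mul_le {x : ℂ × ℂ × ℂ} {z : ℂ}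
    (hz : ‖z‖ = 1) (h : ‖1 - x.2.1 * z‖ ≤ ‖x.1 - x.2.2 * z‖) :
    HasDisjointHyperplaneThrough tetrablockE x := by
  obtain ⟨l, m, hl, hml, hx⟩ : ∃ l m : ℂ, l ≠ 0 ∧ ‖m‖ ≤ ‖l‖ ∧
      m * (x.1 - x.2.2 * z) = l * (1 - x.2.1 * z) := by
    by_cases hp : x.1 - x.2.2 * z = 0
    · have hq : 1 - x.2.1 * z = 0 := norm_le_zero_iff.1 (by simpa [hp] using h)
      exact ⟨1, 0, one_ne_zero, by simp, by simp [hp, hq]⟩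
    · exact ⟨_, _, hp, h, mul_comm _ _⟩
  have hz0 : z ≠ 0 := norm_ne_zero_iff.1 (by simp [hz])
  refine ⟨m, l * z, -(m * z), l, by simp [hl, hz0], by linear_combination hx,
    fun y hy hyd => ?_⟩
  have hyl : m * (y.1 - y.2.2 * z) = l * (1 - y.2.1 * z) := by linear_combination hyd
  have hlt := norm_sub_mul_lt_norm_one_sub_mul_of_mem_tetrablockE hy hz
  have hcontra :=
    calc ‖l‖ * ‖1 - y.2.1 * z‖ = ‖m‖ * ‖y.1 - y.2.2 * z‖ := by rw [← norm_mul, ← norm_mul, hyl]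
      _ ≤ ‖l‖ * ‖y.1 - y.2.2 * z‖ := by gcongr
      _ < ‖l‖ * ‖1 - y.2.1 * z‖ := by gcongr
  exact hcontra.false

theorem tetrablock_linearly_convex (x : ℂ × ℂ × ℂ) (hx : x ∉ tetrablockE) :
    ∃ a b c d : ℂ, (a, b, c) ≠ (0, 0, 0) ∧
      a * x.1 + b * x.2.1 + c * x.2.2 = d ∧
      ∀ y ∈ tetrablockE, a * y.1 + b * y.2.1 + c * y.2.2 ≠ d := by
  change HasDisjointHyperplaneThrough tetrablockE x
  rcases le_or_gt 1 ‖x.2.2‖ with hc | hc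
  · exact hasDisjointHyperplaneThrough_of_one_le_norm hc
  wlog hBA : ‖x.2.1 - conj x.1 * x.2.2‖ ≤ ‖x.1 - conj x.2.1 * x.2.2‖ generalizing x
  · exact .of_swap (fun y => swap_mem_tetrablockE)
      (this _ (fun h => hx (swap_mem_tetrablockE h)) hc (not_le.1 hBA).le)
  obtain ⟨z, hz, hle⟩ := exists_norm_eq_one_norm_one_sub_mul_le_of_not_mem_tetrablockE hx hc hBA
  exact hasDisjointHyperplaneThrough_of_norm_one_sub_mul_le hz hle
end

section
/- For r ∈ [0,1] and θ, τ ∈ R, the point (r·e^{iθ}, r·e^{iτ}, e^{i(θ+τ)}) lies in the closure of E but not in E, i.e. it is a boundary point of the tetrablock. -/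
/-! Points with `x₁ = x̄₂ x₃`, `x₂ = x̄₁ x₃` and `|x₃| = 1` make the defining sum of `E` equal to `1`,
so they lie outside `E`. Shrinking such a point by `t ∈ (0, 1)` turns the first two terms into
`(t - t²) x₁` and `(t - t²) x₂`, so when all coordinates lie in the closed unit disc the sum is at
most `2(t - t²) + t² = 1 - (1 - t)² < 1`; letting `t → 1` puts the point in the closure of `E`. -/

open Complex ComplexConjugate

section SelfConjugatePoints

variable {x : ℂ × ℂ × ℂ} (h₁ : x.1 = conj x.2.1 * x.2.2) (h₂ : x.2.1 = conj x.1 * x.2.2)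
include h₁ h₂

theorem notMem_tetrablockE (h₃ : 1 ≤ ‖x.2.2‖) : x ∉ tetrablockE := by
  intro hx
  simp only [tetrablockE, Set.mem_ofPred_eq, ← h₁, ← h₂, sub_self, norm_zero, zero_add] at hx
  nlinarith

theorem real_smul_mem_tetrablockE (hx₁ : ‖x.1‖ ≤ 1) (hx₂ : ‖x.2.1‖ ≤ 1) (hx₃ : ‖x.2.2‖ ≤ 1)
    {t : ℝ} (ht : t ∈ Set.Ioo 0 1) : (t : ℂ) • x ∈ tetrablockE := by
  obtain ⟨ht₀, ht₁⟩ := ht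
  have key : ∀ {a b : ℂ}, a = conj b * x.2.2 →
      (t : ℂ) * a - conj ((t : ℂ) * b) * ((t : ℂ) * x.2.2) = ((t - t ^ 2 : ℝ) : ℂ) * a := by
    intro a b hab
    rw [map_mul, conj_ofReal, hab]
    push_cast
    ring
  have hc : 0 ≤ t - t ^ 2 := by nlinarith
  simp only [tetrablockE, Set.mem_ofPred_eq, Prod.smul_fst, Prod.smul_snd, smul_eq_mul,
    key h₁, key h₂, norm_mul, norm_real, Real.norm_eq_abs, abs_of_nonneg hc,
    abs_of_pos ht₀, mul_pow]
  have hx₃' : ‖x.2.2‖ ^ 2 ≤ 1 := pow_le_one₀ (norm_nonneg _) hx₃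
  nlinarith [mul_le_mul_of_nonneg_left hx₁ hc, mul_le_mul_of_nonneg_left hx₂ hc,
    mul_le_mul_of_nonneg_left hx₃' (sq_nonneg t)]

theorem mem_closure_tetrablockE (hx₁ : ‖x.1‖ ≤ 1) (hx₂ : ‖x.2.1‖ ≤ 1) (hx₃ : ‖x.2.2‖ ≤ 1) :
    x ∈ closure tetrablockE := by
  have hcont : Continuous fun t : ℝ => (t : ℂ) • x := by fun_prop
  have h1 : (1 : ℝ) ∈ closure (Set.Ioo 0 1) := by
    rw [closure_Ioo zero_ne_one]
    exact Set.right_mem_Icc.2 zero_le_one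
  simpa using map_mem_closure hcont h1
    fun t ht => real_smul_mem_tetrablockE h₁ h₂ hx₁ hx₂ hx₃ ht

end SelfConjugatePoints

theorem conj_mul_exp_add (r θ τ : ℝ) :
    conj ((r : ℂ) * exp (τ * I)) * exp ((θ + τ : ℝ) * I) = r * exp (θ * I) := by
  rw [map_mul, conj_ofReal, mul_assoc, ← exp_conj, ← exp_add]
  congr 2
  simp only [map_mul, conj_ofReal, conj_I]
  push_cast
  ring

theorem norm_ofReal_mul_exp {r : ℝ} (hr : 0 ≤ r) (θ : ℝ) : ‖(r : ℂ) * exp (θ * I)‖ = r := by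
  rw [norm_mul, norm_exp_ofReal_mul_I, mul_one, norm_real, Real.norm_of_nonneg hr]

theorem boundary_point_of_tetrablock (r : ℝ) (hr0 : 0 ≤ r) (hr1 : r ≤ 1) (θ τ : ℝ) :
    ((r : ℂ) * Complex.exp (θ * Complex.I),
     (r : ℂ) * Complex.exp (τ * Complex.I),
     Complex.exp ((θ + τ : ℝ) * Complex.I)) ∈
      closure tetrablockE \ tetrablockE := by
  have h₁ := conj_mul_exp_add r θ τ
  have h₂ : conj ((r : ℂ) * exp (θ * I)) * exp ((θ + τ : ℝ) * I) = r * exp (τ * I) := by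
    rw [add_comm θ τ]
    exact conj_mul_exp_add r τ θ
  have h₃ : ‖exp ((θ + τ : ℝ) * I)‖ = 1 := norm_exp_ofReal_mul_I _
  exact ⟨mem_closure_tetrablockE h₁.symm h₂.symm ((norm_ofReal_mul_exp hr0 θ).trans_le hr1)
      ((norm_ofReal_mul_exp hr0 τ).trans_le hr1) h₃.le,
    notMem_tetrablockE h₁.symm h₂.symm h₃.ge⟩
end

section
/- If x lies on the boundary of the tetrablock E and x1 = conj(x2)·x3, then either x = (r·e^{iθ}, r·e^{iτ}, e^{i(θ+τ)}) for some r ∈ [0,1], θ, τ ∈ R, or x = (e^{iθ}, r·e^{iτ}, r·e^{i(θ+τ)}) for some r ∈ [0,1], θ, τ ∈ R, or x = (r·e^{iθ}, e^{iτ}, r·e^{i(θ+τ)}) for some r ∈ [0,1], θ, τ ∈ R. -/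
open Complex

/-!
On the boundary of `E` the defining function
`F x = |x₁ - x̄₂x₃| + |x₂ - x̄₁x₃| + |x₃|²` equals `1`, and `|x₂| ≤ 1` since this holds on `E`.
If `x₁ = x̄₂x₃`, then `F x = |x₂|(1 - |x₃|²) + |x₃|²`, so `F x = 1` forces `(1 - |x₂|)(1 - |x₃|²) = 0`.
Writing `x₂` and `x₃` in polar form, `|x₃| = 1` gives the first family and `|x₂| = 1` the third.
-/

noncomputable def tetrablockFun (x : ℂ × ℂ × ℂ) : ℝ :=
  ‖x.1 - (starRingEnd ℂ) x.2.1 * x.2.2‖ + ‖x.2.1 - (starRingEnd ℂ) x.1 * x.2.2‖ + ‖x.2.2‖ ^ 2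

lemma tetrablockE_eq : tetrablockE = {x | tetrablockFun x < 1} := rfl

lemma continuous_tetrablockFun : Continuous tetrablockFun := by
  unfold tetrablockFun
  fun_prop

lemma tetrablockFun_eq_one_of_mem_closure_diff {x : ℂ × ℂ × ℂ}
    (hx : x ∈ closure tetrablockE \ tetrablockE) : tetrablockFun x = 1 := by
  rw [tetrablockE_eq] at hx
  exact le_antisymm (closure_lt_subset_le continuous_tetrablockFun continuous_const hx.1)
    (not_lt.mp hx.2)

lemma norm_sq_le_tetrablockFun (x : ℂ × ℂ × ℂ) : ‖x.2.2‖ ^ 2 ≤ tetrablockFun x := by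
  unfold tetrablockFun
  linarith [norm_nonneg (x.1 - (starRingEnd ℂ) x.2.1 * x.2.2),
    norm_nonneg (x.2.1 - (starRingEnd ℂ) x.1 * x.2.2)]

lemma norm_le_norm_sub_conj_mul_add (a b c : ℂ) :
    ‖b‖ ≤ ‖b - (starRingEnd ℂ) a * c‖ + ‖a‖ * ‖c‖ := by
  calc ‖b‖ = ‖(b - (starRingEnd ℂ) a * c) + (starRingEnd ℂ) a * c‖ := by ring_nf
    _ ≤ ‖b - (starRingEnd ℂ) a * c‖ + ‖a‖ * ‖c‖ := by
      simpa only [norm_mul, Complex.norm_conj] using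
        norm_add_le (b - (starRingEnd ℂ) a * c) ((starRingEnd ℂ) a * c)

lemma norm_snd_fst_lt_one_of_mem_tetrablockE {x : ℂ × ℂ × ℂ} (hx : x ∈ tetrablockE) :
    ‖x.2.1‖ < 1 := by
  obtain ⟨a, b, c⟩ := x
  have hb := norm_le_norm_sub_conj_mul_add a b c
  have ha := norm_le_norm_sub_conj_mul_add b a c
  have hA := norm_nonneg (a - (starRingEnd ℂ) b * c)
  have hB := norm_nonneg (b - (starRingEnd ℂ) a * c)
  have hc := norm_nonneg c
  replace hx : ‖a - (starRingEnd ℂ) b * c‖ + ‖b - (starRingEnd ℂ) a * c‖ + ‖c‖ ^ 2 < 1 := hx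
  have hc1 : ‖c‖ < 1 := by nlinarith
  -- `‖b‖ (1 - ‖c‖²) ≤ B + A ‖c‖ ≤ A + B < 1 - ‖c‖²`
  nlinarith [mul_nonneg hA hc, mul_le_mul_of_nonneg_right ha hc]

lemma norm_snd_fst_le_one_of_mem_closure {x : ℂ × ℂ × ℂ} (hx : x ∈ closure tetrablockE) :
    ‖x.2.1‖ ≤ 1 :=
  closure_minimal (fun _ hy => (norm_snd_fst_lt_one_of_mem_tetrablockE hy).le)
    (isClosed_le (f := fun y : ℂ × ℂ × ℂ => ‖y.2.1‖) (by fun_prop) continuous_const) hx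

lemma tetrablockFun_of_fst_eq {x : ℂ × ℂ × ℂ} (h : x.1 = (starRingEnd ℂ) x.2.1 * x.2.2)
    (hc : ‖x.2.2‖ ≤ 1) : tetrablockFun x = ‖x.2.1‖ * (1 - ‖x.2.2‖ ^ 2) + ‖x.2.2‖ ^ 2 := by
  have hsnd : x.2.1 - (starRingEnd ℂ) x.1 * x.2.2 = x.2.1 * ((1 - ‖x.2.2‖ ^ 2 : ℝ) : ℂ) := by
    rw [h, map_mul, Complex.conj_conj, mul_assoc, Complex.conj_mul']
    push_cast
    ring
  have hnn : 0 ≤ 1 - ‖x.2.2‖ ^ 2 := by nlinarith [norm_nonneg x.2.2]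
  rw [tetrablockFun, h, sub_self, norm_zero, zero_add, ← h, hsnd, norm_mul,
    Complex.norm_of_nonneg hnn]

-- The argument of `x₃` is written as `θ + τ` with `θ = arg x₃ - arg x₂`, `τ = arg x₂`.
lemma eq_polar_of_fst_eq {x : ℂ × ℂ × ℂ} (h : x.1 = (starRingEnd ℂ) x.2.1 * x.2.2) :
    x = ((‖x.2.1‖ * ‖x.2.2‖ : ℝ) * exp ((arg x.2.2 - arg x.2.1 : ℝ) * I),
      (‖x.2.1‖ : ℂ) * exp (arg x.2.1 * I),
      (‖x.2.2‖ : ℂ) * exp ((arg x.2.2 - arg x.2.1 + arg x.2.1 : ℝ) * I)) := by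
  obtain ⟨a, b, c⟩ := x
  dsimp only at h ⊢
  subst h
  have hconj : (starRingEnd ℂ) b = ‖b‖ * exp (-(arg b * I)) := by
    conv_lhs => rw [← norm_mul_exp_arg_mul_I b]
    rw [map_mul, Complex.conj_ofReal, ← Complex.exp_conj, map_mul, Complex.conj_ofReal,
      Complex.conj_I, mul_neg]
  refine Prod.ext ?_ (Prod.ext (norm_mul_exp_arg_mul_I b).symm ?_)
  · conv_lhs => rw [hconj, ← norm_mul_exp_arg_mul_I c]
    rw [mul_mul_mul_comm, ← exp_add]
    push_cast
    ring_nf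
  · simpa only [sub_add_cancel] using (norm_mul_exp_arg_mul_I c).symm

theorem boundary_degenerate_points (x : ℂ × ℂ × ℂ)
    (hx : x ∈ closure tetrablockE \ tetrablockE)
    (h : x.1 = (starRingEnd ℂ) x.2.1 * x.2.2) :
    (∃ r : ℝ, ∃ θ τ : ℝ, 0 ≤ r ∧ r ≤ 1 ∧
      x = ((r : ℂ) * Complex.exp (θ * Complex.I),
           (r : ℂ) * Complex.exp (τ * Complex.I),
           Complex.exp ((θ + τ : ℝ) * Complex.I))) ∨
    (∃ r : ℝ, ∃ θ τ : ℝ, 0 ≤ r ∧ r ≤ 1 ∧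
      x = (Complex.exp (θ * Complex.I),
           (r : ℂ) * Complex.exp (τ * Complex.I),
           (r : ℂ) * Complex.exp ((θ + τ : ℝ) * Complex.I))) ∨
    (∃ r : ℝ, ∃ θ τ : ℝ, 0 ≤ r ∧ r ≤ 1 ∧
      x = ((r : ℂ) * Complex.exp (θ * Complex.I),
           Complex.exp (τ * Complex.I),
           (r : ℂ) * Complex.exp ((θ + τ : ℝ) * Complex.I))) := by
  have hF := tetrablockFun_eq_one_of_mem_closure_diff hx
  have hb := norm_snd_fst_le_one_of_mem_closure hx.1
  have hc : ‖x.2.2‖ ≤ 1 := by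
    nlinarith [norm_sq_le_tetrablockFun x, norm_nonneg x.2.2]
  have hdeg : (1 - ‖x.2.1‖) * (1 - ‖x.2.2‖ ^ 2) = 0 := by
    rw [tetrablockFun_of_fst_eq h hc] at hF
    linarith
  have hpolar := eq_polar_of_fst_eq h
  rcases mul_eq_zero.mp hdeg with hb1 | hc1
  · replace hb1 : ‖x.2.1‖ = 1 := by linarith
    refine Or.inr (Or.inr ⟨‖x.2.2‖, arg x.2.2 - arg x.2.1, arg x.2.1, norm_nonneg _, hc, ?_⟩)
    simpa only [hb1, one_mul, Complex.ofReal_one] using hpolar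
  · replace hc1 : ‖x.2.2‖ = 1 := by nlinarith [norm_nonneg x.2.2]
    refine Or.inl ⟨‖x.2.1‖, arg x.2.2 - arg x.2.1, arg x.2.1, norm_nonneg _, hb, ?_⟩
    simpa only [hc1, mul_one, Complex.ofReal_one, one_mul] using hpolar
end
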